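/- arXiv:0805.0415 — 4 statements merged into one kernel-verified Lean document; each statement's English description precedes it below -/
import Mathlib

section
/- For all natural numbers n ≥ 3 and real (or polynomial ring) parameters x, s, the squares of the Fibonacci polynomials satisfy F_n(x,s)^2 - (x^2+s)F_{n-1}(x,s)^2 - s(x^2+s)F_{n-2}(x,s)^2 + s^3 F_{n-3}(x,s)^2 = 0. -/
def fibPoly (x s : ℝ) : ℕ → ℝ
  | 0 => 0
  | 1 => 1
  | (n+2) => x * fibPoly x s (n+1) + s * fibPoly x s n

theorem fibPoly_sq_recurrence (x s : ℝ) (n : ℕ) (hn : 3 ≤ n) :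
    fibPoly x s n ^ 2 - (x^2 + s) * fibPoly x s (n-1) ^ 2
      - s * (x^2 + s) * fibPoly x s (n-2) ^ 2 + s^3 * fibPoly x s (n-3) ^ 2 = 0 := by
  obtain ⟨m, rfl⟩ := Nat.exists_eq_add_of_le hn
  rw [show 3 + m = m + 3 by ring]
  simp only [Nat.add_sub_cancel, show m + 3 - 1 = m + 2 from rfl,
    show m + 3 - 2 = m + 1 from rfl, fibPoly]
  ring
end

section
/- For all n ≥ 2, the 3×3 determinant of squared Fibonacci numbers det[[F_n², F_{n-1}², F_{n-2}²], [F_{n+1}², F_n², F_{n-1}²], [F_{n+2}², F_{n+1}², F_n²]] equals 2(-1)^n. -/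
lemma cassini (m : ℕ) :
    (Nat.fib (m+1) : ℤ)^2 - (Nat.fib m : ℤ)^2 - (Nat.fib m : ℤ) * (Nat.fib (m+1) : ℤ)
      = (-1)^m := by
  induction m with
  | zero => simp
  | succ k ih =>
    have h : (Nat.fib (k+2) : ℤ) = Nat.fib k + Nat.fib (k+1) := by
      rw [Nat.fib_add_two]; push_cast; ring
    rw [h, pow_succ]
    linear_combination (-1 : ℤ) * ih

theorem fib_sq_det (n : ℕ) (hn : 2 ≤ n) :
    Matrix.det
      !![(Nat.fib n : ℤ)^2,     (Nat.fib (n-1) : ℤ)^2, (Nat.fib (n-2) : ℤ)^2;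
         (Nat.fib (n+1) : ℤ)^2, (Nat.fib n : ℤ)^2,     (Nat.fib (n-1) : ℤ)^2;
         (Nat.fib (n+2) : ℤ)^2, (Nat.fib (n+1) : ℤ)^2, (Nat.fib n : ℤ)^2]
      = 2 * (-1)^n := by
  obtain ⟨m, rfl⟩ : ∃ m, n = m + 2 := ⟨n - 2, by omega⟩
  have e1 : m + 2 - 1 = m + 1 := by omega
  have e2 : m + 2 - 2 = m := by omega
  rw [e1, e2, Matrix.det_fin_three]
  set a : ℤ := (Nat.fib m : ℤ) with ha
  set b : ℤ := (Nat.fib (m+1) : ℤ) with hb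
  have h2 : (Nat.fib (m+2) : ℤ) = a + b := by
    rw [ha, hb, Nat.fib_add_two]; push_cast; ring
  have h3 : (Nat.fib (m+3) : ℤ) = a + 2*b := by
    have : m + 3 = (m+1) + 2 := by omega
    rw [this, Nat.fib_add_two]; push_cast [h2]; ring
  have h4 : (Nat.fib (m+2+2) : ℤ) = 2*a + 3*b := by
    rw [Nat.fib_add_two]; push_cast [h2, h3]; ring
  have hD : b^2 - a^2 - a*b = (-1)^m := cassini m
  have hsq : ((-1:ℤ)^m)^2 = 1 := by
    rw [← pow_mul, mul_comm, pow_mul]; norm_num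
  have h21 : m + 2 + 1 = m + 3 := by omega
  rw [h21, h2, h3, h4, pow_add]
  norm_num [Matrix.of_apply, Matrix.cons_val_zero, Matrix.cons_val_one, Matrix.head_cons, Matrix.cons_val_two, Matrix.tail_cons]
  linear_combination (2*((b^2-a^2-a*b)^2 + (b^2-a^2-a*b)*(-1:ℤ)^m + ((-1:ℤ)^m)^2)) * hD
    + (2*(-1:ℤ)^m) * hsq
end

section
/- For ℓ ≥ 1 and n ≥ 2, the Fibonacci polynomial subsequence satisfies F_{ℓn}(x,s) - L_ℓ(x,s) F_{ℓ(n-1)}(x,s) + (-s)^ℓ F_{ℓ(n-2)}(x,s) = 0, where L_ℓ is the Lucas polynomial. -/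
def lucasPoly (x s : ℝ) : ℕ → ℝ
  | 0 => 2
  | 1 => x
  | (n+2) => x * lucasPoly x s (n+1) + s * lucasPoly x s n

lemma fibPoly_add (x s : ℝ) (p q : ℕ) :
    fibPoly x s (p + q + 1) =
      fibPoly x s (p+1) * fibPoly x s (q+1) + s * fibPoly x s p * fibPoly x s q := by
  induction q using Nat.twoStepInduction generalizing p with
  | zero => simp [fibPoly]
  | one =>
    show fibPoly x s (p + 2) = _
    simp [fibPoly]; ring
  | more q ih1 ih2 =>
    have h1 := ih1 p
    have h2 := ih2 p
    have e : fibPoly x s (p + (q+2) + 1)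
        = x * fibPoly x s (p + (q+1) + 1) + s * fibPoly x s (p + q + 1) := rfl
    have e2 : fibPoly x s (q+2+1) = x * fibPoly x s (q+1+1) + s * fibPoly x s (q+1) := rfl
    rw [show (q:ℕ)+1+1 = q+2 from rfl] at h2
    rw [e, e2, show (q:ℕ)+1+1 = q+2 from rfl, h1, h2]
    have e3 : fibPoly x s (q+2) = x * fibPoly x s (q+1) + s * fibPoly x s q := rfl
    linear_combination (-s * fibPoly x s p) * e3

lemma fibPoly_docagne (x s : ℝ) (j k : ℕ) :
    fibPoly x s (j + k) * fibPoly x s (j+1) - fibPoly x s (j + k + 1) * fibPoly x s j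
      = (-s)^j * fibPoly x s k := by
  induction j with
  | zero => simp [fibPoly]
  | succ j ih =>
    have e1 : fibPoly x s (j+2) = x * fibPoly x s (j+1) + s * fibPoly x s j := rfl
    have e2 : fibPoly x s (j + k + 2) = x * fibPoly x s (j+k+1) + s * fibPoly x s (j+k) := rfl
    rw [show j + 1 + k = j + k + 1 by ring, show j + k + 1 + 1 = j + k + 2 by ring,
      show (j:ℕ) + 1 + 1 = j + 2 by ring, e1, e2]
    linear_combination (-s) * ih

lemma lucasPoly_eq (x s : ℝ) (j : ℕ) :
    lucasPoly x s (j+1) = fibPoly x s (j+2) + s * fibPoly x s j := by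
  induction j using Nat.twoStepInduction with
  | zero => simp [fibPoly, lucasPoly]
  | one => simp [fibPoly, lucasPoly]; ring
  | more j ih1 ih2 =>
    have : lucasPoly x s (j+3) = x * lucasPoly x s (j+2) + s * lucasPoly x s (j+1) := rfl
    rw [this, ih1, ih2,
      show fibPoly x s (j+4) = x * fibPoly x s (j+3) + s * fibPoly x s (j+2) from rfl,
      show fibPoly x s (j+2) = x * fibPoly x s (j+1) + s * fibPoly x s j from rfl]
    ring

theorem fibPoly_subseq_recurrence (x s : ℝ) (ℓ n : ℕ) (hℓ : 1 ≤ ℓ) (hn : 2 ≤ n) :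
    fibPoly x s (ℓ*n) - lucasPoly x s ℓ * fibPoly x s (ℓ*(n-1))
      + (-s)^ℓ * fibPoly x s (ℓ*(n-2)) = 0 := by
  obtain ⟨j, rfl⟩ : ∃ j, ℓ = j + 1 := ⟨ℓ - 1, (Nat.succ_pred_eq_of_pos hℓ).symm⟩
  obtain ⟨k, rfl⟩ : ∃ k, n = k + 2 := ⟨n - 2, (Nat.sub_add_cancel hn).symm⟩
  set m := (j+1) * k with hm
  have h1 : (j+1) * (k+2) = (m + j) + (j+1) + 1 := by simp [hm]; ring
  have h2 : (j+1) * (k+2-1) = m + j + 1 := by simp [hm]; ring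
  have h3 : (j+1) * (k+2-2) = m := by simp [hm]
  rw [h1, h2, h3, fibPoly_add x s (m+j) (j+1), lucasPoly_eq]
  have hd := fibPoly_docagne x s j m
  rw [show j + m = m + j by ring] at hd
  linear_combination s * hd
end

section
/- For k ≥ 1 and n ≥ k, det[(F_{n+i-j}(x,s))^k]_{i,j=0}^k = (-1)^{C(k+1,2)(n-k)} (∏_{ℓ=0}^k binom(k,ℓ)) s^{C(k+1,2)(n-k) + 2·C(k+1,3)} ∏_{j=0}^{k-1} Fac(k-j, s, 1)², where Fac(m,s,1) = ∏_{i=1}^m F_i(x,s). -/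
lemma binet (α β : ℝ) (m : ℕ) :
    (α - β) * fibPoly (α + β) (-(α * β)) m = α ^ m - β ^ m := by
  induction m using Nat.twoStepInduction with
  | zero => simp [fibPoly]
  | one => simp [fibPoly]
  | more m ih1 ih2 =>
    show (α - β) * ((α+β) * fibPoly (α+β) (-(α*β)) (m+1) + (-(α*β)) * fibPoly (α+β) (-(α*β)) m) = _
    linear_combination (α + β) * ih2 - (α * β) * ih1

lemma gauss (k : ℕ) : ∑ i ∈ Finset.range (k+1), i = (k+1).choose 2 := by
  have h1 : (∑ i ∈ Finset.range (k+1), i) * 2 = (k+1) * k := by simpa using Finset.sum_range_id_mul_two (k+1)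
  have h2 : (k+1).choose 2 = (k+1) * k / 2 := by rw [Nat.choose_two_right]; simp
  have h3 : 2 ∣ (k+1) * k := by rw [Nat.mul_comm]; exact (Nat.even_mul_succ_self k).two_dvd
  omega

lemma sum_i_mul (k : ℕ) : ∑ i ∈ Finset.range (k+1), i * (k - i) = (k+1).choose 3 := by
  induction k with
  | zero => decide
  | succ k ih =>
    have h1 : ∑ i ∈ Finset.range (k+2), i * (k + 1 - i) = ∑ i ∈ Finset.range (k+1), i * (k + 1 - i) := by
      rw [Finset.sum_range_succ]; simp
    have h2 : ∑ i ∈ Finset.range (k+1), i * (k + 1 - i)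
        = (∑ i ∈ Finset.range (k+1), i * (k - i)) + ∑ i ∈ Finset.range (k+1), i := by
      rw [← Finset.sum_add_distrib]
      refine Finset.sum_congr rfl fun i hi => ?_
      rw [Finset.mem_range] at hi
      have h : k + 1 - i = (k - i) + 1 := by omega
      rw [h, Nat.mul_succ]
    rw [h1, h2, gauss, ih]
    have h := Nat.choose_succ_succ' (k+1) 2
    norm_num at h ⊢
    omega
lemma sum_rev (k : ℕ) : ∑ i ∈ Finset.range (k+1), (k - i) = ∑ i ∈ Finset.range (k+1), i := by
  have := Finset.sum_range_reflect (fun j => j) (k+1)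
  simp only [Nat.add_sub_cancel] at this
  rw [← this]

lemma prod_Iio_fin {M : Type*} [CommMonoid M] {m : ℕ} (j : Fin m) (h : ℕ → M) :
    ∏ i ∈ Finset.Iio j, h (i:ℕ) = ∏ i ∈ Finset.range (j:ℕ), h i := by
  rw [← Nat.Iio_eq_range, ← Fin.map_valEmbedding_Iio, Finset.prod_map]
  rfl

lemma swap_pairs {M : Type*} [CommMonoid M] {m : ℕ} (f : Fin m → Fin m → M) :
    ∏ i : Fin m, ∏ j ∈ Finset.Ioi i, f i j = ∏ j : Fin m, ∏ i ∈ Finset.Iio j, f i j := by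
  refine Finset.prod_comm' fun i j => ?_
  simp [Finset.mem_Ioi, Finset.mem_Iio, and_comm]

lemma prod_const_pairs (c : ℝ) (k : ℕ) :
    ∏ i : Fin (k+1), ∏ _j ∈ Finset.Ioi i, c = c ^ ((k+1).choose 2) := by
  have : ∀ i : Fin (k+1), ∏ _j ∈ Finset.Ioi i, c = c ^ (k - (i:ℕ)) := by
    intro i; rw [Finset.prod_const, Fin.card_Ioi]; norm_num
  rw [Finset.prod_congr rfl fun i _ => this i, Finset.prod_pow_eq_pow_sum]
  congr 1
  rw [Fin.sum_univ_eq_sum_range (fun i => k - i), sum_rev]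
  have h1 : (∑ i ∈ Finset.range (k+1), i) * 2 = (k+1) * k := by
    simpa using Finset.sum_range_id_mul_two (k+1)
  have h2 : (k+1).choose 2 = (k+1) * k / 2 := by rw [Nat.choose_two_right]; simp
  have h3 : 2 ∣ (k+1) * k := by rw [Nat.mul_comm]; exact (Nat.even_mul_succ_self k).two_dvd
  omega

/-- `Fac m = F₁ F₂ ⋯ F_m`. -/
def fibFac (x s : ℝ) (m : ℕ) : ℝ := ∏ i ∈ Finset.range m, fibPoly x s (i+1)

lemma prod_alpha_pairs (a : ℝ) (k : ℕ) :
    ∏ i : Fin (k+1), ∏ _j ∈ Finset.Ioi i, a ^ (i:ℕ) = a ^ ((k+1).choose 3) := by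
  have h : ∀ i : Fin (k+1), ∏ _j ∈ Finset.Ioi i, a ^ (i:ℕ) = a ^ ((i:ℕ) * (k - (i:ℕ))) := by
    intro i
    rw [Finset.prod_const, Fin.card_Ioi, ← pow_mul]
    norm_num
  rw [Finset.prod_congr rfl fun i _ => h i, Finset.prod_pow_eq_pow_sum]
  congr 1
  rw [Fin.sum_univ_eq_sum_range (fun i => i * (k - i)), sum_i_mul]

lemma prod_beta_pairs (a : ℝ) (k : ℕ) :
    ∏ i : Fin (k+1), ∏ j ∈ Finset.Ioi i, a ^ (k - (j:ℕ)) = a ^ ((k+1).choose 3) := by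
  rw [swap_pairs]
  have h : ∀ j : Fin (k+1), ∏ _i ∈ Finset.Iio j, a ^ (k - (j:ℕ)) = a ^ ((k - (j:ℕ)) * (j:ℕ)) := by
    intro j
    rw [Finset.prod_const, Fin.card_Iio, ← pow_mul]
  rw [Finset.prod_congr rfl fun j _ => h j, Finset.prod_pow_eq_pow_sum]
  congr 1
  rw [Fin.sum_univ_eq_sum_range (fun j => (k - j) * j), ← sum_i_mul]
  exact Finset.sum_congr rfl fun i _ => Nat.mul_comm _ _

lemma prod_F_pairs (x s : ℝ) (k : ℕ) :
    ∏ i : Fin (k+1), ∏ j ∈ Finset.Ioi i, fibPoly x s ((j:ℕ) - (i:ℕ))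
      = ∏ j ∈ Finset.range (k+1), fibFac x s j := by
  rw [swap_pairs]
  have h : ∀ j : Fin (k+1), ∏ i ∈ Finset.Iio j, fibPoly x s ((j:ℕ) - (i:ℕ)) = fibFac x s (j:ℕ) := by
    intro j
    rw [prod_Iio_fin j (fun i => fibPoly x s ((j:ℕ) - i))]
    unfold fibFac
    rw [← Finset.prod_range_reflect (fun i => fibPoly x s (i+1)) (j:ℕ)]
    exact Finset.prod_congr rfl fun i hi => by
      rw [Finset.mem_range] at hi; congr 1; omega
  rw [Finset.prod_congr rfl fun j _ => h j, Fin.prod_univ_eq_prod_range (fun j => fibFac x s j)]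

lemma two_choose_two (k : ℕ) : 2 * (k+1).choose 2 = (k+1) * k := by
  have h2 : (k+1).choose 2 = (k+1) * k / 2 := by rw [Nat.choose_two_right]; simp
  have h3 : 2 ∣ (k+1) * k := by rw [Nat.mul_comm]; exact (Nat.even_mul_succ_self k).two_dvd
  omega

theorem core (x s : ℝ) (k n : ℕ) (hk : 1 ≤ k) (hn : k ≤ n)
    (α β : ℝ) (hx : α + β = x) (hs : α * β = -s) (hne : α ≠ β) :
    Matrix.det (Matrix.of fun i j : Fin (k+1) => fibPoly x s (n + (i:ℕ) - (j:ℕ)) ^ k)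
      = (-1)^((k+1).choose 2 * (n-k)) * (∏ ℓ ∈ Finset.range (k+1), (k.choose ℓ : ℝ))
        * s^((k+1).choose 2 * (n-k) + 2 * (k+1).choose 3)
        * ∏ j ∈ Finset.range k, fibFac x s (k-j) ^ 2 := by
  have hd : α - β ≠ 0 := sub_ne_zero.mpr hne
  have hF : ∀ m, (α - β) * fibPoly x s m = α ^ m - β ^ m := by
    intro m
    have h := binet α β m
    rwa [hx, show -(α*β) = s by rw [hs]; ring] at h
  set C := (k+1).choose 2 with hC
  set T := (k+1).choose 3 with hT
  set uN : ℕ → ℝ := fun l => α ^ l * β ^ (k - l) with huN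
  set cN : ℕ → ℝ := fun l => (-1:ℝ) ^ (l + k) * (k.choose l : ℝ) with hcN
  set M := Matrix.of fun i j : Fin (k+1) => fibPoly x s (n + (i:ℕ) - (j:ℕ)) ^ k with hM
  set A := Matrix.of fun (i l : Fin (k+1)) => uN (l:ℕ) ^ (i:ℕ) with hA
  set B := Matrix.of fun (l j : Fin (k+1)) => cN (l:ℕ) * uN (l:ℕ) ^ (n - (j:ℕ)) with hB
  set B2 := Matrix.of fun (l j : Fin (k+1)) => uN (l:ℕ) ^ (k - (j:ℕ)) with hB2
  -- step: scaled matrix equals A * B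
  have hAB : ((α - β)^k) • M = A * B := by
    funext i j
    have hij : (j:ℕ) ≤ n := le_trans (Nat.le_of_lt_succ j.isLt) hn
    have hp : n + (i:ℕ) - (j:ℕ) = (i:ℕ) + (n - (j:ℕ)) := by omega
    rw [Matrix.smul_apply, Matrix.mul_apply]
    show (α-β)^k * (fibPoly x s (n + (i:ℕ) - (j:ℕ)) ^ k) = _
    rw [← mul_pow, hF, sub_pow]
    rw [show (∑ l : Fin (k+1), A i l * B l j)
        = ∑ l ∈ Finset.range (k+1), uN l ^ (i:ℕ) * (cN l * uN l ^ (n - (j:ℕ)))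
      from (Fin.sum_univ_eq_sum_range (fun l => uN l ^ (i:ℕ) * (cN l * uN l ^ (n - (j:ℕ)))) (k+1)).symm ▸ rfl]
    refine Finset.sum_congr rfl fun m hm => ?_
    rw [Finset.mem_range] at hm
    rw [hp, huN, hcN]
    simp only []
    have e1 : (α ^ m * β ^ (k - m)) ^ (i:ℕ) * ((-1:ℝ) ^ (m + k) * (k.choose m : ℝ) * (α ^ m * β ^ (k - m)) ^ (n - (j:ℕ)))
        = (-1:ℝ)^(m+k) * (k.choose m : ℝ) * (α ^ m * β ^ (k-m)) ^ ((i:ℕ) + (n - (j:ℕ))) := by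
      rw [pow_add]; ring
    rw [e1, mul_pow, ← pow_mul, ← pow_mul, ← pow_mul, ← pow_mul, Nat.mul_comm m, Nat.mul_comm (k-m)]
    ring
  -- determinant of A
  have hdetA : A.det = ∏ i : Fin (k+1), ∏ j ∈ Finset.Ioi i, (uN (j:ℕ) - uN (i:ℕ)) := by
    have hAv : A = (Matrix.vandermonde fun l : Fin (k+1) => uN (l:ℕ)).transpose := rfl
    rw [hAv, Matrix.det_transpose, Matrix.det_vandermonde]
  -- determinant of B2
  have hdetB2 : B2.det
      = ∏ i : Fin (k+1), ∏ j ∈ Finset.Ioi i, (uN (k - (j:ℕ)) - uN (k - (i:ℕ))) := by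
    rw [← Matrix.det_submatrix_equiv_self Fin.revPerm B2]
    have hrev : B2.submatrix Fin.revPerm Fin.revPerm
        = Matrix.vandermonde (fun l : Fin (k+1) => uN (k - (l:ℕ))) := by
      funext l j
      show uN ((Fin.revPerm l : Fin (k+1)) : ℕ) ^ (k - ((Fin.revPerm j : Fin (k+1)) : ℕ))
          = uN (k - (l:ℕ)) ^ (j:ℕ)
      have hl : ((Fin.revPerm l : Fin (k+1)) : ℕ) = k - (l:ℕ) := by
        simp [Fin.revPerm, Fin.val_rev]
      have hj : k - ((Fin.revPerm j : Fin (k+1)) : ℕ) = (j:ℕ) := by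
        have : ((Fin.revPerm j : Fin (k+1)) : ℕ) = k - (j:ℕ) := by
          simp [Fin.revPerm, Fin.val_rev]
        rw [this]
        omega
      rw [hl, hj]
    rw [hrev, Matrix.det_vandermonde]
  set P := ∏ j ∈ Finset.range (k+1), fibFac x s j with hP
  set Q := ∏ l ∈ Finset.range (k+1), (k.choose l : ℝ) with hQ
  -- the Vandermonde product for A
  have hV : (∏ i : Fin (k+1), ∏ j ∈ Finset.Ioi i, (uN (j:ℕ) - uN (i:ℕ)))
      = α^T * (β^T * ((α-β)^C * P)) := by
    have point : ∀ i : Fin (k+1), ∀ j ∈ Finset.Ioi i,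
        uN (j:ℕ) - uN (i:ℕ)
          = α^(i:ℕ) * (β^(k-(j:ℕ)) * ((α-β) * fibPoly x s ((j:ℕ)-(i:ℕ)))) := by
      intro i j hj
      rw [Finset.mem_Ioi] at hj
      have hij : (i:ℕ) < (j:ℕ) := hj
      have hjk : (j:ℕ) ≤ k := Nat.le_of_lt_succ j.isLt
      rw [hF]
      show α ^ (j:ℕ) * β ^ (k - (j:ℕ)) - α ^ (i:ℕ) * β ^ (k - (i:ℕ)) = _
      have e2 : α ^ (j:ℕ) = α ^ (i:ℕ) * α ^ ((j:ℕ)-(i:ℕ)) := by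
        rw [← pow_add]; congr 1; omega
      have e3 : β ^ (k-(i:ℕ)) = β ^ (k-(j:ℕ)) * β ^ ((j:ℕ)-(i:ℕ)) := by
        rw [← pow_add]; congr 1; omega
      rw [e2, e3]; ring
    rw [Finset.prod_congr rfl fun i _ => Finset.prod_congr rfl (point i)]
    simp only [Finset.prod_mul_distrib]
    rw [prod_alpha_pairs, prod_beta_pairs, prod_const_pairs, prod_F_pairs]
  -- the Vandermonde product for B2
  have hW : (∏ i : Fin (k+1), ∏ j ∈ Finset.Ioi i, (uN (k - (j:ℕ)) - uN (k - (i:ℕ))))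
      = α^T * (β^T * ((-1:ℝ)^C * ((α-β)^C * P))) := by
    have point : ∀ i : Fin (k+1), ∀ j ∈ Finset.Ioi i,
        uN (k - (j:ℕ)) - uN (k - (i:ℕ))
          = α^(k-(j:ℕ)) * (β^(i:ℕ) * ((-1:ℝ) * ((α-β) * fibPoly x s ((j:ℕ)-(i:ℕ))))) := by
      intro i j hj
      rw [Finset.mem_Ioi] at hj
      have hij : (i:ℕ) < (j:ℕ) := hj
      have hjk : (j:ℕ) ≤ k := Nat.le_of_lt_succ j.isLt
      rw [hF]
      show α ^ (k-(j:ℕ)) * β ^ (k - (k - (j:ℕ))) - α ^ (k-(i:ℕ)) * β ^ (k - (k - (i:ℕ))) = _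
      have e1 : k - (k - (j:ℕ)) = (j:ℕ) := by omega
      have e1' : k - (k - (i:ℕ)) = (i:ℕ) := by omega
      have e2 : α ^ (k-(i:ℕ)) = α ^ (k-(j:ℕ)) * α ^ ((j:ℕ)-(i:ℕ)) := by
        rw [← pow_add]; congr 1; omega
      have e3 : β ^ (j:ℕ) = β ^ (i:ℕ) * β ^ ((j:ℕ)-(i:ℕ)) := by
        rw [← pow_add]; congr 1; omega
      rw [e1, e1', e2, e3]; ring
    rw [Finset.prod_congr rfl fun i _ => Finset.prod_congr rfl (point i)]
    simp only [Finset.prod_mul_distrib]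
    rw [prod_beta_pairs, prod_alpha_pairs, prod_const_pairs, prod_const_pairs, prod_F_pairs]
  -- determinant of B
  have hBfact : B = Matrix.diagonal (fun l : Fin (k+1) => cN (l:ℕ))
      * (Matrix.diagonal (fun l : Fin (k+1) => uN (l:ℕ) ^ (n-k)) * B2) := by
    funext l j
    have hjk : (j:ℕ) ≤ k := Nat.le_of_lt_succ j.isLt
    rw [Matrix.diagonal_mul, Matrix.diagonal_mul]
    show cN (l:ℕ) * uN (l:ℕ) ^ (n - (j:ℕ)) = cN (l:ℕ) * (uN (l:ℕ) ^ (n-k) * uN (l:ℕ) ^ (k-(j:ℕ)))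
    rw [← pow_add]
    congr 2
    omega
  have hprodc : (∏ l : Fin (k+1), cN (l:ℕ)) = (-1:ℝ)^C * Q := by
    rw [Fin.prod_univ_eq_prod_range (fun l => cN l) (k+1), hcN]
    simp only []
    rw [Finset.prod_mul_distrib, Finset.prod_pow_eq_pow_sum]
    congr 1
    rw [Finset.sum_add_distrib, gauss, Finset.sum_const, Finset.card_range, smul_eq_mul]
    rw [pow_add, ← hC]
    have : ((-1:ℝ)) ^ ((k+1) * k) = 1 := by
      refine Even.neg_one_pow ?_
      rw [Nat.mul_comm]
      exact Nat.even_mul_succ_self k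
    rw [this, mul_one]
  have hprodu : (∏ l : Fin (k+1), uN (l:ℕ) ^ (n-k)) = ((-1:ℝ)^C * s^C) ^ (n-k) := by
    rw [Finset.prod_pow]
    congr 1
    rw [Fin.prod_univ_eq_prod_range (fun l => uN l) (k+1), huN]
    simp only []
    rw [Finset.prod_mul_distrib, Finset.prod_pow_eq_pow_sum, Finset.prod_pow_eq_pow_sum,
      gauss, sum_rev, gauss, ← hC, ← mul_pow, hs, neg_eq_neg_one_mul, mul_pow]
  -- putting it together
  have hdetkey : ((α - β)^k)^(k+1) * M.det = A.det * B.det := by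
    rw [← Matrix.det_mul, ← hAB, Matrix.det_smul, Fintype.card_fin]
  have hdetB : B.det = ((-1:ℝ)^C * Q) * (((-1:ℝ)^C * s^C) ^ (n-k)
      * (α^T * (β^T * ((-1:ℝ)^C * ((α-β)^C * P))))) := by
    rw [hBfact, Matrix.det_mul, Matrix.det_mul, Matrix.det_diagonal, Matrix.det_diagonal,
      hprodc, hprodu, hdetB2, hW, mul_assoc]
  have hP2 : (∏ j ∈ Finset.range k, fibFac x s (k-j) ^ 2) = P^2 := by
    rw [Finset.prod_pow]
    congr 1
    rw [hP, Finset.prod_range_succ' (fun j => fibFac x s j) k]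
    have h0 : fibFac x s 0 = 1 := by simp [fibFac]
    rw [h0, mul_one, ← Finset.prod_range_reflect (fun j => fibFac x s (j+1)) k]
    exact Finset.prod_congr rfl fun i hi => by
      rw [Finset.mem_range] at hi; congr 1; omega
  -- final algebra
  apply mul_left_cancel₀ (pow_ne_zero (k+1) (pow_ne_zero k hd))
  rw [hdetkey, hdetA, hV, hdetB, hP2]
  have h1 : (α^T * β^T)^2 = s^(2*T) := by
    rw [← mul_pow, hs, show (((-s:ℝ))^T)^2 = ((-s:ℝ)^2)^T by
      rw [← pow_mul, ← pow_mul, Nat.mul_comm], neg_sq, ← pow_mul]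
  have hsignC : ((-1:ℝ))^C * (-1:ℝ)^C = 1 := by
    rw [← pow_add]
    exact Even.neg_one_pow ⟨C, rfl⟩
  have eC2 : (α-β)^C * (α-β)^C = ((α-β)^k)^(k+1) := by
    rw [← pow_add, ← pow_mul]
    congr 1
    have h := two_choose_two k
    have h2 : (k+1) * k = k * (k+1) := Nat.mul_comm _ _
    omega
  have epow : ((((-1:ℝ))^C * s^C) : ℝ)^(n-k) = (-1:ℝ)^(C*(n-k)) * s^(C*(n-k)) := by
    rw [mul_pow, ← pow_mul, ← pow_mul]
  rw [epow, pow_add s]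
  linear_combination (Q*P^2*((-1:ℝ)^(C*(n-k)))*(s^(C*(n-k)))*((α-β)^C*(α-β)^C)*((-1:ℝ)^C*(-1:ℝ)^C)) * h1
    + (Q*P^2*((-1:ℝ)^(C*(n-k)))*(s^(C*(n-k)))*(s^(2*T))*((-1:ℝ)^C*(-1:ℝ)^C)) * eC2
    + (Q*P^2*((-1:ℝ)^(C*(n-k)))*(s^(C*(n-k)))*(s^(2*T))*(((α-β)^k)^(k+1))) * hsignC

noncomputable def fibP (s : ℝ) : ℕ → Polynomial ℝ
  | 0 => 0
  | 1 => 1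
  | (m+2) => Polynomial.X * fibP s (m+1) + Polynomial.C s * fibP s m

lemma fibP_eval (s y : ℝ) (m : ℕ) : (fibP s m).eval y = fibPoly y s m := by
  induction m using Nat.twoStepInduction with
  | zero => simp [fibP, fibPoly]
  | one => simp [fibP, fibPoly]
  | more m ih1 ih2 =>
    show Polynomial.eval y (Polynomial.X * fibP s (m+1) + Polynomial.C s * fibP s m)
      = y * fibPoly y s (m+1) + s * fibPoly y s m
    simp [ih1, ih2]

theorem fibPoly_power_det (x s : ℝ) (k n : ℕ) (hk : 1 ≤ k) (hn : k ≤ n) :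
    Matrix.det (Matrix.of fun i j : Fin (k+1) => fibPoly x s (n + (i:ℕ) - (j:ℕ)) ^ k)
      = (-1)^((k+1).choose 2 * (n-k)) * (∏ ℓ ∈ Finset.range (k+1), (k.choose ℓ : ℝ))
        * s^((k+1).choose 2 * (n-k) + 2 * (k+1).choose 3)
        * ∏ j ∈ Finset.range k, fibFac x s (k-j) ^ 2 := by
  classical
  set p : Polynomial ℝ :=
    Matrix.det (Matrix.of fun i j : Fin (k+1) => fibP s (n + (i:ℕ) - (j:ℕ)) ^ k) with hp
  set q : Polynomial ℝ :=
    Polynomial.C ((-1:ℝ)^((k+1).choose 2 * (n-k)) * (∏ ℓ ∈ Finset.range (k+1), (k.choose ℓ : ℝ))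
        * s^((k+1).choose 2 * (n-k) + 2 * (k+1).choose 3))
      * ∏ j ∈ Finset.range k, (∏ i ∈ Finset.range (k-j), fibP s (i+1)) ^ 2 with hq
  have heval_p : ∀ y : ℝ, p.eval y
      = Matrix.det (Matrix.of fun i j : Fin (k+1) => fibPoly y s (n + (i:ℕ) - (j:ℕ)) ^ k) := by
    intro y
    have h := RingHom.map_det (Polynomial.evalRingHom y)
      (Matrix.of fun i j : Fin (k+1) => fibP s (n + (i:ℕ) - (j:ℕ)) ^ k)
    rw [hp]
    show (Polynomial.evalRingHom y) _ = _
    rw [h]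
    congr 1
    funext i j
    show Polynomial.eval y (fibP s (n + (i:ℕ) - (j:ℕ)) ^ k) = fibPoly y s (n + (i:ℕ) - (j:ℕ)) ^ k
    rw [Polynomial.eval_pow, fibP_eval]
  have heval_q : ∀ y : ℝ, q.eval y
      = (-1)^((k+1).choose 2 * (n-k)) * (∏ ℓ ∈ Finset.range (k+1), (k.choose ℓ : ℝ))
        * s^((k+1).choose 2 * (n-k) + 2 * (k+1).choose 3)
        * ∏ j ∈ Finset.range k, fibFac y s (k-j) ^ 2 := by
    intro y
    rw [hq]
    simp only [Polynomial.eval_mul, Polynomial.eval_C, Polynomial.eval_prod, Polynomial.eval_pow,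
      fibP_eval]
    rfl
  have hagree : ∀ y : ℝ, 1 + 2 * Real.sqrt |s| < y → p.eval y = q.eval y := by
    intro y hy
    have hsq : Real.sqrt |s| ^ 2 = |s| := Real.sq_sqrt (abs_nonneg s)
    have hsnn : 0 ≤ Real.sqrt |s| := Real.sqrt_nonneg _
    have habs : -|s| ≤ s := neg_abs_le s
    have hs4 : 0 < y^2 + 4*s := by nlinarith
    set D := Real.sqrt (y^2 + 4*s) with hD
    have hD2 : D^2 = y^2 + 4*s := Real.sq_sqrt hs4.le
    have hDpos : 0 < D := Real.sqrt_pos.mpr hs4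
    set a := (y + D)/2 with ha
    set b := (y - D)/2 with hb
    have hab : a + b = y := by rw [ha, hb]; ring
    have hmul : a * b = -s := by rw [ha, hb]; linear_combination (-(1:ℝ)/4) * hD2
    have hne : a ≠ b := by
      have hd : a - b = D := by rw [ha, hb]; ring
      intro h
      rw [h, sub_self] at hd
      exact hDpos.ne hd
    rw [heval_p y, heval_q y]
    exact core y s k n hk hn a b hab hmul hne
  have hpq : p = q := by
    have hroot : (Set.Ioi (1 + 2 * Real.sqrt |s|)) ⊆ {y | (p - q).IsRoot y} := by
      intro y hy
      simp only [Set.mem_setOf_eq, Polynomial.IsRoot, Polynomial.eval_sub]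
      rw [hagree y hy, sub_self]
    have h0 : p - q = 0 :=
      Polynomial.eq_zero_of_infinite_isRoot _ ((Set.Ioi_infinite _).mono hroot)
    exact sub_eq_zero.mp h0
  have := congrArg (Polynomial.eval x) hpq
  rw [heval_p x, heval_q x] at this
  exact this
end
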